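/- The linear span of Dirac measures at rational points, span{δ_x : x ∈ ℚ^d}, is dense in the space of bounded Radon measures M(ℝ^d) with respect to the dual norm of C^{1+α}(ℝ^d). Consequently, the closure Z of M(ℝ^d) in (C^{1+α}(ℝ^d))* is a separable Banach space. -/

import Mathlib

open MeasureTheory Metric Filter
open scoped NNReal ENNReal BigOperators Topology

noncomputable section

/-- Euclidean space ℝ^d. -/
abbrev Ed (d : ℕ) : Type := EuclideanSpace ℝ (Fin d)

/-- The α-Hölder seminorm of the gradient map `g = fderiv ℝ f`. -/
def holderSemi {d : ℕ} (α : ℝ) (g : Ed d → (Ed d →L[ℝ] ℝ)) : ℝ :=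
  ⨆ x, ⨆ y, ‖g x - g y‖ / dist x y ^ α

/-- The C^{1+α} norm: sup|f| + sup|∇f| + α-Hölder seminorm of ∇f. -/
def c1aNorm {d : ℕ} (α : ℝ) (f : Ed d → ℝ) : ℝ :=
  (⨆ x, |f x|) + (⨆ x, ‖fderiv ℝ f x‖) + holderSemi α (fderiv ℝ f)

/-- Membership in C^{1+α}(ℝ^d): bounded C¹ function with bounded, α-Hölder gradient. -/
def MemC1a {d : ℕ} (α : ℝ) (f : Ed d → ℝ) : Prop :=
  ContDiff ℝ 1 f ∧ BddAbove (Set.range fun x => |f x|) ∧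
    BddAbove (Set.range fun x => ‖fderiv ℝ f x‖) ∧
    ∃ C : ℝ≥0, HolderWith C α.toNNReal (fderiv ℝ f)

/-- The dual norm on (C^{1+α}(ℝ^d))*, applied to a (not necessarily linear)
functional `L` on functions: sup of |L f| over ‖f‖_{C^{1+α}} ≤ 1. -/
def dualNorm {d : ℕ} (α : ℝ) (L : (Ed d → ℝ) → ℝ) : ℝ :=
  sSup {r | ∃ f, MemC1a α f ∧ c1aNorm α f ≤ 1 ∧ r = |L f|}

/-- Integration pairing of a finite signed (bounded Radon) measure against a function,
via the Jordan decomposition. -/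
def sPair {d : ℕ} (s : SignedMeasure (Ed d)) (f : Ed d → ℝ) : ℝ :=
  (∫ x, f x ∂s.toJordanDecomposition.posPart) - ∫ x, f x ∂s.toJordanDecomposition.negPart

/-- A point of ℝ^d with all coordinates rational. -/
def IsRatPoint {d : ℕ} (x : Ed d) : Prop := ∀ i, ∃ q : ℚ, x i = (q : ℝ)

/-- Membership in Z, the closure of M(ℝ^d) in (C^{1+α}(ℝ^d))*: a functional that is
approximated in dual norm by (functionals induced by) bounded Radon measures. -/
def InZM {d : ℕ} (α : ℝ) (z : (Ed d → ℝ) → ℝ) : Prop :=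
  ∀ ε > (0 : ℝ), ∃ s : SignedMeasure (Ed d), dualNorm α (fun f => z f - sPair s f) ≤ ε

/-! Every `f` in the unit ball of `C^{1+α}` satisfies `|f| ≤ 1` and is `1`-Lipschitz, so it is
enough to approximate a finite measure `ν` uniformly against such test functions. Enumerate
`ℚ^d` as `q₀, q₁, …`, make the closed `δ`-balls around the `qᵢ` disjoint by `disjointed` and keep
the first `n` of the resulting sets `Bᵢ`, enough to carry all but `ε` of the mass. Then
`∑ ν(Bᵢ) δ_{qᵢ}` is within `δ ν(ℝ^d) + ε` of `ν`. Rounding the weights to rationals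
leaves a countable family of functionals that is dense in `Z`. -/

theorem tendsto_measureReal_compl_biUnion_range {Ω : Type*} [MeasurableSpace Ω] (ν : Measure Ω)
    [IsFiniteMeasure ν] {D : ℕ → Set Ω} (hDm : ∀ i, MeasurableSet (D i))
    (hD : ⋃ i, D i = Set.univ) :
    Tendsto (fun n => ν.real (⋃ i ∈ Finset.range n, D i)ᶜ) atTop (𝓝 0) := by
  set A : ℕ → Set Ω := fun n => ⋃ i ∈ Finset.range n, D i
  have hmono : Monotone A := fun m n hmn =>
    Set.biUnion_subset_biUnion_left (Finset.coe_subset.2 (Finset.range_mono hmn))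
  have hA : ⋃ n, A n = Set.univ := by
    rw [← hD]
    ext x
    simp only [A, Set.mem_iUnion, Finset.mem_range, exists_prop]
    exact ⟨fun ⟨_, i, _, hx⟩ => ⟨i, hx⟩, fun ⟨i, hx⟩ => ⟨i + 1, i, i.lt_succ_self, hx⟩⟩
  have hlim : Tendsto (fun n => ν.real (A n)) atTop (𝓝 (ν.real Set.univ)) := by
    have := tendsto_measure_iUnion_atTop (μ := ν) hmono
    rw [hA] at this
    exact (ENNReal.tendsto_toReal (measure_ne_top ν _)).comp this
  have hAm : ∀ n, MeasurableSet (A n) := fun n => Finset.measurableSet_biUnion _ fun i _ => hDm i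
  change Tendsto (fun n => ν.real (A n)ᶜ) atTop (𝓝 0)
  simp_rw [measureReal_compl (hAm _)]
  simpa using (tendsto_const_nhds (x := ν.real Set.univ)).sub hlim

section BoundedLipschitz

variable {X : Type*} [PseudoMetricSpace X] [MeasurableSpace X]
  {ν : Measure X} [IsFiniteMeasure ν] {f : X → ℝ}

theorem abs_setIntegral_sub_measureReal_mul_le (hf : LipschitzWith 1 f) (hfi : Integrable f ν)
    {B : Set X} {p : X} {δ : ℝ} (hB : B ⊆ closedBall p δ) :
    |∫ x in B, f x ∂ν - ν.real B * f p| ≤ δ * ν.real B := by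
  rw [← smul_eq_mul, ← setIntegral_const, ← integral_sub hfi.integrableOn (integrableOn_const),
    ← Real.norm_eq_abs]
  refine norm_setIntegral_le_of_norm_le_const (measure_lt_top ν _) fun x hx => ?_
  calc ‖f x - f p‖ ≤ dist x p := by simpa [Real.dist_eq] using hf.dist_le_mul x p
    _ ≤ δ := hB hx

theorem abs_integral_sub_sum_measureReal_mul_le [OpensMeasurableSpace X]
    (hf : LipschitzWith 1 f) (hf1 : ∀ x, |f x| ≤ 1) {ι : Type*} (s : Finset ι) {B : ι → Set X}
    {p : ι → X} {δ : ℝ} (hδ : 0 ≤ δ)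
    (hBm : ∀ i, MeasurableSet (B i)) (hBd : Set.PairwiseDisjoint ↑s B)
    (hB : ∀ i, B i ⊆ closedBall (p i) δ) :
    |∫ x, f x ∂ν - ∑ i ∈ s, ν.real (B i) * f (p i)| ≤
      δ * ν.real Set.univ + ν.real (⋃ i ∈ s, B i)ᶜ := by
  set U := ⋃ i ∈ s, B i
  have hfi : Integrable f ν :=
    (integrable_const (1 : ℝ)).mono' hf.continuous.aestronglyMeasurable
      (Eventually.of_forall hf1)
  have hUm : MeasurableSet U := s.measurableSet_biUnion fun i _ => hBm i
  have hsplit : ∫ x, f x ∂ν = ∑ i ∈ s, ∫ x in B i, f x ∂ν + ∫ x in Uᶜ, f x ∂ν := by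
    rw [← integral_add_compl hUm hfi,
      integral_biUnion_finset s (fun i _ => hBm i) hBd fun i _ => hfi.integrableOn]
  have hcovered : |∑ i ∈ s, (∫ x in B i, f x ∂ν - ν.real (B i) * f (p i))| ≤ δ * ν.real U :=
    calc _ ≤ ∑ i ∈ s, δ * ν.real (B i) := (Finset.abs_sum_le_sum_abs _ _).trans
          (Finset.sum_le_sum fun i _ => abs_setIntegral_sub_measureReal_mul_le hf hfi (hB i))
      _ = δ * ν.real U := by rw [← Finset.mul_sum, measureReal_biUnion_finset hBd fun i _ => hBm i]
  have huncovered : |∫ x in Uᶜ, f x ∂ν| ≤ ν.real Uᶜ := by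
    simpa using norm_setIntegral_le_of_norm_le_const (f := f) (measure_lt_top ν Uᶜ)
      fun x _ => (Real.norm_eq_abs (f x)).trans_le (hf1 x)
  calc _ = |∑ i ∈ s, (∫ x in B i, f x ∂ν - ν.real (B i) * f (p i)) + ∫ x in Uᶜ, f x ∂ν| := by
        rw [hsplit, Finset.sum_sub_distrib]; congr 1; ring
    _ ≤ δ * ν.real U + ν.real Uᶜ := (abs_add_le _ _).trans (add_le_add hcovered huncovered)
    _ ≤ δ * ν.real Set.univ + ν.real Uᶜ := by gcongr; exacts [measure_ne_top ν _, Set.subset_univ U]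

theorem exists_forall_abs_integral_sub_sum_le [OpensMeasurableSpace X] (ν : Measure X)
    [IsFiniteMeasure ν] {q : ℕ → X} (hq : DenseRange q) {ε : ℝ} (hε : 0 < ε) :
    ∃ c : ℕ → ℝ, ∀ᶠ n in atTop, ∀ f : X → ℝ, LipschitzWith 1 f → (∀ x, |f x| ≤ 1) →
      |∫ x, f x ∂ν - ∑ i ∈ Finset.range n, c i * f (q i)| ≤ ε := by
  set δ := ε / 2 / (ν.real Set.univ + 1)
  have hδ : 0 < δ := by positivity
  have hδν : δ * ν.real Set.univ ≤ ε / 2 :=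
    calc δ * ν.real Set.univ ≤ δ * (ν.real Set.univ + 1) := by gcongr; linarith
      _ = ε / 2 := div_mul_cancel₀ _ (by positivity)
  set D := disjointed fun i => closedBall (q i) δ
  have hDm : ∀ i, MeasurableSet (D i) :=
    MeasurableSet.disjointed fun _ => measurableSet_closedBall
  have hcover : ⋃ i, D i = Set.univ := by
    refine iUnion_disjointed.trans (Set.eq_univ_of_forall fun x => ?_)
    obtain ⟨i, hi⟩ := Metric.denseRange_iff.1 hq x δ hδ
    exact Set.mem_iUnion.2 ⟨i, mem_closedBall.2 hi.le⟩
  refine ⟨fun i => ν.real (D i), ?_⟩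
  filter_upwards [(tendsto_measureReal_compl_biUnion_range ν hDm hcover).eventually
    (eventually_le_nhds (half_pos hε))] with n hn f hf hf1
  calc _ ≤ δ * ν.real Set.univ + ν.real (⋃ i ∈ Finset.range n, D i)ᶜ :=
        abs_integral_sub_sum_measureReal_mul_le hf hf1 _ hδ.le hDm
          ((disjoint_disjointed _).set_pairwise _) (disjointed_subset _)
    _ ≤ ε := by linarith

end BoundedLipschitz

theorem exists_forall_abs_sPair_sub_sum_le {d : ℕ} (s : SignedMeasure (Ed d)) {q : ℕ → Ed d}
    (hq : DenseRange q) {ε : ℝ} (hε : 0 < ε) :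
    ∃ c : ℕ → ℝ, ∀ᶠ n in atTop, ∀ f : Ed d → ℝ, LipschitzWith 1 f → (∀ x, |f x| ≤ 1) →
      |sPair s f - ∑ i ∈ Finset.range n, c i * f (q i)| ≤ ε := by
  obtain ⟨c₁, h₁⟩ :=
    exists_forall_abs_integral_sub_sum_le s.toJordanDecomposition.posPart hq (half_pos hε)
  obtain ⟨c₂, h₂⟩ :=
    exists_forall_abs_integral_sub_sum_le s.toJordanDecomposition.negPart hq (half_pos hε)
  refine ⟨c₁ - c₂, ?_⟩
  filter_upwards [h₁, h₂] with n hn₁ hn₂ f hf hf1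
  calc _ = |(∫ x, f x ∂s.toJordanDecomposition.posPart - ∑ i ∈ Finset.range n, c₁ i * f (q i)) -
        (∫ x, f x ∂s.toJordanDecomposition.negPart - ∑ i ∈ Finset.range n, c₂ i * f (q i))| := by
        simp only [sPair, Pi.sub_apply, sub_mul, Finset.sum_sub_distrib]; congr 1; ring
    _ ≤ ε / 2 + ε / 2 := (abs_sub _ _).trans (add_le_add (hn₁ f hf hf1) (hn₂ f hf hf1))
    _ = ε := add_halves ε

theorem exists_denseRange_isRatPoint (d : ℕ) :
    ∃ q : ℕ → Ed d, DenseRange q ∧ ∀ n, IsRatPoint (q n) := by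
  obtain ⟨e, he⟩ := exists_surjective_nat (Fin d → ℚ)
  have hcast : DenseRange fun v : Fin d → ℚ => WithLp.toLp 2 fun i => (v i : ℝ) :=
    (WithLp.toLp_surjective 2).denseRange.comp (DenseRange.piMap fun _ => Rat.denseRange_cast)
      (PiLp.continuous_toLp 2 _)
  exact ⟨_, hcast.comp he.denseRange (by fun_prop), fun n i => ⟨e n i, rfl⟩⟩

section DualNorm

variable {d : ℕ} {α : ℝ}

theorem memC1a_zero : MemC1a α (fun _ : Ed d => (0 : ℝ)) :=
  ⟨contDiff_const, ⟨0, by simp [upperBounds]⟩, ⟨0, by simp [upperBounds]⟩, 0,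
    fun x y => by simp⟩

theorem c1aNorm_zero : c1aNorm α (fun _ : Ed d => (0 : ℝ)) = 0 := by
  simp [c1aNorm, holderSemi]

theorem holderSemi_nonneg (g : Ed d → (Ed d →L[ℝ] ℝ)) : 0 ≤ holderSemi α g :=
  Real.iSup_nonneg fun _ => Real.iSup_nonneg fun _ =>
    div_nonneg (norm_nonneg _) (Real.rpow_nonneg dist_nonneg α)

namespace MemC1a

variable {f : Ed d → ℝ}

theorem abs_le_one (hf : MemC1a α f) (hn : c1aNorm α f ≤ 1) (x : Ed d) : |f x| ≤ 1 := by
  have := Real.iSup_nonneg fun x => norm_nonneg (fderiv ℝ f x)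
  have := holderSemi_nonneg (α := α) (fderiv ℝ f)
  exact (le_ciSup hf.2.1 x).trans (by unfold c1aNorm at hn; linarith)

theorem lipschitzWith_one (hf : MemC1a α f) (hn : c1aNorm α f ≤ 1) : LipschitzWith 1 f := by
  have := Real.iSup_nonneg fun x => abs_nonneg (f x)
  have := holderSemi_nonneg (α := α) (fderiv ℝ f)
  refine lipschitzWith_of_nnnorm_fderiv_le (hf.1.differentiable one_ne_zero) fun x => ?_
  rw [← NNReal.coe_le_coe, NNReal.coe_one]
  exact (le_ciSup hf.2.2.1 x).trans (by unfold c1aNorm at hn; linarith)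

end MemC1a

theorem dualNorm_nonneg (L : (Ed d → ℝ) → ℝ) : 0 ≤ dualNorm α L :=
  Real.sSup_nonneg (by rintro _ ⟨f, -, -, rfl⟩; exact abs_nonneg _)

theorem dualNorm_le {L : (Ed d → ℝ) → ℝ} {B : ℝ}
    (h : ∀ f, MemC1a α f → c1aNorm α f ≤ 1 → |L f| ≤ B) : dualNorm α L ≤ B :=
  csSup_le ⟨_, _, memC1a_zero, c1aNorm_zero.le.trans zero_le_one, rfl⟩
    (by rintro _ ⟨f, hf, hn, rfl⟩; exact h f hf hn)

/-- A triangle inequality that survives the junk value `dualNorm α L = 0` for `L` unbounded on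
the unit ball: if `z - w` is unbounded there, so is `z - y`. -/
theorem dualNorm_sub_le_of_forall_abs_sub_le {z w y : (Ed d → ℝ) → ℝ} {B : ℝ}
    (h : ∀ f, MemC1a α f → c1aNorm α f ≤ 1 → |w f - y f| ≤ B) :
    dualNorm α (fun f => z f - y f) ≤ dualNorm α (fun f => z f - w f) + B := by
  by_cases hzw : BddAbove {r | ∃ f, MemC1a α f ∧ c1aNorm α f ≤ 1 ∧ r = |z f - w f|}
  · refine dualNorm_le fun f hf hn => ?_
    calc |z f - y f| ≤ |z f - w f| + |w f - y f| := abs_sub_le _ _ _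
      _ ≤ dualNorm α (fun f => z f - w f) + B :=
        add_le_add (le_csSup hzw ⟨f, hf, hn, rfl⟩) (h f hf hn)
  · have hB : 0 ≤ B := (abs_nonneg _).trans (h _ memC1a_zero (c1aNorm_zero.le.trans zero_le_one))
    have hzy : ¬BddAbove {r | ∃ f, MemC1a α f ∧ c1aNorm α f ≤ 1 ∧ r = |z f - y f|} := by
      rintro ⟨M, hM⟩
      refine hzw ⟨M + B, ?_⟩
      rintro _ ⟨f, hf, hn, rfl⟩
      calc |z f - w f| ≤ |z f - y f| + |y f - w f| := abs_sub_le _ _ _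
        _ ≤ M + B := add_le_add (hM ⟨f, hf, hn, rfl⟩) (abs_sub_comm (w f) (y f) ▸ h f hf hn)
    rw [dualNorm, Real.sSup_of_not_bddAbove hzy]
    linarith [dualNorm_nonneg (α := α) fun f => z f - w f]

end DualNorm

theorem exists_rat_forall_abs_sum_mul_sub_le {ι : Type*} [Fintype ι] (c : ι → ℝ) {η : ℝ}
    (hη : 0 < η) : ∃ c' : ι → ℚ, ∀ v : ι → ℝ, (∀ i, |v i| ≤ 1) →
      |∑ i, c i * v i - ∑ i, (c' i : ℝ) * v i| ≤ η := by
  set N : ℝ := (Fintype.card ι : ℝ)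
  have hrat : ∀ i, ∃ r : ℚ, |c i - r| < η / (N + 1) := fun i =>
    exists_rat_near (c i) (by positivity)
  choose c' hc' using hrat
  refine ⟨c', fun v hv => ?_⟩
  calc _ = |∑ i, (c i - c' i) * v i| := by simp only [sub_mul, Finset.sum_sub_distrib]
    _ ≤ ∑ i, |(c i - c' i) * v i| := Finset.abs_sum_le_sum_abs _ _
    _ ≤ ∑ _i : ι, η / (N + 1) := Finset.sum_le_sum fun i _ => by
        rw [abs_mul]; exact mul_le_of_le_one_right (abs_nonneg _) (hv i) |>.trans (hc' i).le
    _ = N * (η / (N + 1)) := by simp [N]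
    _ ≤ η := by
        rw [mul_div_assoc', div_le_iff₀ (by positivity)]
        nlinarith

theorem exists_forall_c1a_abs_sPair_sub_sum_le {d : ℕ} (α : ℝ) (s : SignedMeasure (Ed d))
    {q : ℕ → Ed d} (hq : DenseRange q) {ε : ℝ} (hε : 0 < ε) :
    ∃ (n : ℕ) (c : Fin n → ℝ), ∀ f, MemC1a α f → c1aNorm α f ≤ 1 →
      |sPair s f - ∑ i, c i * f (q i)| ≤ ε := by
  obtain ⟨c, hc⟩ := exists_forall_abs_sPair_sub_sum_le s hq hε
  obtain ⟨n, hn⟩ := hc.exists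
  refine ⟨n, fun i => c i, fun f hf hnf => ?_⟩
  rw [← Finset.sum_range fun i => c i * f (q i)]
  exact hn f (hf.lipschitzWith_one hnf) (hf.abs_le_one hnf)

def ratDiracCombos {d : ℕ} (q : ℕ → Ed d) : Set ((Ed d → ℝ) → ℝ) :=
  Set.range fun t : Σ n, Fin n → ℚ => fun f => ∑ i, (t.2 i : ℝ) * f (q i)

theorem exists_mem_ratDiracCombos_dualNorm_sub_le {d : ℕ} {α : ℝ} {q : ℕ → Ed d}
    (hq : DenseRange q) {z : (Ed d → ℝ) → ℝ} (hz : InZM α z) {ε : ℝ} (hε : 0 < ε) :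
    ∃ y ∈ ratDiracCombos q, dualNorm α (fun f => z f - y f) ≤ ε := by
  obtain ⟨s, hs⟩ := hz (ε / 3) (by positivity)
  obtain ⟨n, c, hc⟩ := exists_forall_c1a_abs_sPair_sub_sum_le α s hq (ε := ε / 3) (by positivity)
  obtain ⟨c', hc'⟩ := exists_rat_forall_abs_sum_mul_sub_le c (η := ε / 3) (by positivity)
  refine ⟨_, ⟨⟨n, c'⟩, rfl⟩, (dualNorm_sub_le_of_forall_abs_sub_le (w := sPair s)
    (B := ε / 3 + ε / 3) fun f hf hnf => ?_).trans (by linarith)⟩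
  exact (abs_sub_le _ _ _).trans
    (add_le_add (hc f hf hnf) (hc' (fun i => f (q i)) fun i => hf.abs_le_one hnf _))

theorem dense_rational_diracs_and_separable_general (d : ℕ) (α : ℝ) :
    (∀ (s : SignedMeasure (Ed d)) (ε : ℝ), 0 < ε →
      ∃ (n : ℕ) (c : Fin n → ℝ) (g : Fin n → Ed d), (∀ i, IsRatPoint (g i)) ∧
        dualNorm α (fun f => sPair s f - ∑ i, c i * f (g i)) ≤ ε) ∧
    (∃ S : Set ((Ed d → ℝ) → ℝ), S.Countable ∧
      ∀ z : (Ed d → ℝ) → ℝ, InZM α z → ∀ ε > (0 : ℝ), ∃ y ∈ S,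
        dualNorm α (fun f => z f - y f) ≤ ε) := by
  obtain ⟨q, hq, hq_rat⟩ := exists_denseRange_isRatPoint d
  refine ⟨fun s ε hε => ?_, ratDiracCombos q, Set.countable_range _,
    fun z hz ε hε => exists_mem_ratDiracCombos_dualNorm_sub_le hq hz hε⟩
  obtain ⟨n, c, hc⟩ := exists_forall_c1a_abs_sPair_sub_sum_le α s hq hε
  exact ⟨n, c, fun i => q i, fun i => hq_rat i, dualNorm_le hc⟩

/-- span{δ_x : x ∈ ℚ^d} is dense in M(ℝ^d) for the dual norm of C^{1+α}(ℝ^d);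
consequently Z, the closure of M(ℝ^d) in (C^{1+α}(ℝ^d))*, is separable. -/
theorem dense_rational_diracs_and_separable (d : ℕ) (α : ℝ) (hα : 0 < α) (hα1 : α ≤ 1) :
    (∀ (s : SignedMeasure (Ed d)) (ε : ℝ), 0 < ε →
      ∃ (n : ℕ) (c : Fin n → ℝ) (g : Fin n → Ed d), (∀ i, IsRatPoint (g i)) ∧
        dualNorm α (fun f => sPair s f - ∑ i, c i * f (g i)) ≤ ε) ∧
    (∃ S : Set ((Ed d → ℝ) → ℝ), S.Countable ∧
      ∀ z : (Ed d → ℝ) → ℝ, InZM α z → ∀ ε > (0 : ℝ), ∃ y ∈ S,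
        dualNorm α (fun f => z f - y f) ≤ ε) :=
  dense_rational_diracs_and_separable_general d α
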